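/- If φ: G(X) → E(S¹) is a skeleton mapping into a semigroup S, then there is a unique semigroup homomorphism φ̄: FT¹(X) → S¹ extending φ (i.e. [g]φ̄ = gφ for all g ∈ G(X)); moreover the image (FT¹(X))φ̄ = ⟨(G(X))φ⟩ is a regular subsemigroup of S¹ which is a monoid with identity element 1φ. -/

import Mathlib

/-! Common definitions: the construction of `G(X)`, words, the congruence `ρ`,
the monoid `FT¹(X)`, landscapes, mountains, the maps `β₁, β₂, β`, Green's
relations, sandwich sets, etc. -/

/-- Nested triples over `X` together with the extra symbol `1`. -/
inductive PreG (X : Type) : Type where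
  | one : PreG X
  | base : X → PreG X
  | node : PreG X → PreG X → PreG X → PreG X

namespace PreG

variable {X : Type}

/-- The height `⋏(g)`. -/
def ht : PreG X → ℕ
  | one => 0
  | base _ => 1
  | node l _ _ => ht l + 1

/-- The left entry `g^l` (with `1^l = 1` and `x^l = 1` for `x ∈ X`). -/
def left : PreG X → PreG X
  | one => one
  | base _ => one
  | node l _ _ => l

/-- The right entry `g^r`. -/
def right : PreG X → PreG X
  | one => one
  | base _ => one
  | node _ _ r => r

/-- The central entry `g^c` (with `x^c = x` for `x ∈ X` via `x = (1,x,1)`). -/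
def center : PreG X → PreG X
  | one => one
  | base x => base x
  | node _ c _ => c

/-- Membership in `G(X) = ⋃_{i≥0} G_i(X)`. -/
inductive IsG : PreG X → Prop
  | one : IsG one
  | base (x : X) : IsG (base x)
  | node {l c r : PreG X} :
      IsG l → IsG c → IsG r →
      1 ≤ l.ht → l.ht = r.ht → c.ht + 1 = l.ht →
      l ≠ r →
      (c = l.left ∨ c = l.right) →
      (c = r.left ∨ c = r.right) →
      IsG (node l c r)

theorem IsG.left_isG {g : PreG X} (h : g.IsG) : g.left.IsG := by
  cases h with
  | one => exact .one
  | base x => exact .one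
  | node hl hc hr h1 h2 h3 h4 h5 h6 => exact hl

theorem IsG.right_isG {g : PreG X} (h : g.IsG) : g.right.IsG := by
  cases h with
  | one => exact .one
  | base x => exact .one
  | node hl hc hr h1 h2 h3 h4 h5 h6 => exact hr

theorem IsG.center_isG {g : PreG X} (h : g.IsG) : g.center.IsG := by
  cases h with
  | one => exact .one
  | base x => exact .base x
  | node hl hc hr h1 h2 h3 h4 h5 h6 => exact hc

/-- The ground `ε(g)`. -/
def ground : PreG X → Set (PreG X)
  | one => {one}
  | base x => {one, base x}
  | node l c r => ground l ∪ {node l c r} ∪ ground r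

end PreG

/-- The set `G(X)`. -/
def Gx (X : Type) : Type := {g : PreG X // g.IsG}

namespace Gx

variable {X : Type}

/-- The letter `1`. -/
def gone : Gx X := ⟨PreG.one, .one⟩

instance : Inhabited (Gx X) := ⟨gone⟩

/-- The letter corresponding to `x ∈ X`. -/
def ofX (x : X) : Gx X := ⟨PreG.base x, .base x⟩

/-- `g^l`. -/
def l (g : Gx X) : Gx X := ⟨g.1.left, g.2.left_isG⟩

/-- `g^c`. -/
def c (g : Gx X) : Gx X := ⟨g.1.center, g.2.center_isG⟩

/-- `g^r`. -/
def r (g : Gx X) : Gx X := ⟨g.1.right, g.2.right_isG⟩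

/-- The height of `g`. -/
def ht (g : Gx X) : ℕ := g.1.ht

theorem ht_c_lt : ∀ {g : Gx X}, 2 ≤ g.ht → g.c.ht < g.ht := by
  rintro ⟨g0, hg⟩ h
  cases hg with
  | one => simp [Gx.ht, PreG.ht] at h
  | base x => simp [Gx.ht, PreG.ht] at h
  | node hl hc hr hht hlr hc1 hne hcl hcr =>
    simp only [Gx.ht, Gx.c, PreG.center, PreG.ht] at *
    omega

/-- The step relation of an uphill: `a ∈ {b^l, b^r}` for consecutive letters `a b`. -/
def stepUp (a b : Gx X) : Prop := a = b.l ∨ a = b.r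

/-- The step relation of a downhill: `b ∈ {a^l, a^r}` for consecutive letters `a b`. -/
def stepDown (a b : Gx X) : Prop := b = a.l ∨ b = a.r

/-- The left hill `λ_l(g)` of the mountain `β₁(g)`. -/
def lamL (g : Gx X) : List (Gx X) :=
  if h : 2 ≤ g.ht then lamL g.c ++ [g.l, g]
  else if g.ht = 0 then [g] else [gone, g]
termination_by g.ht
decreasing_by exact ht_c_lt h

/-- The right hill `λ_r(g)` of the mountain `β₁(g)`. -/
def lamR (g : Gx X) : List (Gx X) :=
  if h : 2 ≤ g.ht then [g, g.r] ++ lamR g.c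
  else if g.ht = 0 then [g] else [g, gone]
termination_by g.ht
decreasing_by exact ht_c_lt h

end Gx

/-- The free semigroup `G(X)⁺` on `G(X)`. -/
abbrev Wd (X : Type) := FreeSemigroup (Gx X)

namespace Wd

variable {X : Type}

/-- The one-letter word. -/
def og (g : Gx X) : Wd X := FreeSemigroup.of g

/-- The list of letters of a word. -/
def toL (w : Wd X) : List (Gx X) := w.head :: w.tail

/-- The word with a given (nonempty) list of letters. -/
def ofL (w : List (Gx X)) : Wd X := ⟨w.headI, w.tail⟩

end Wd

/-- The generating relation `ρ_e ∪ ρ_s`. -/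
def rhoBase (X : Type) : Wd X → Wd X → Prop := fun a b =>
  (∃ g : Gx X,
     (a = Wd.og Gx.gone * Wd.og g ∧ b = Wd.og g) ∨
     (a = Wd.og g * Wd.og Gx.gone ∧ b = Wd.og g) ∨
     (a = Wd.og g * Wd.og g ∧ b = Wd.og g)) ∨
  (∃ g : Gx X, 2 ≤ g.ht ∧
     ((a = Wd.og g.c * Wd.og g.l * Wd.og g ∧ b = Wd.og g) ∨
      (a = Wd.og g * Wd.og g.r * Wd.og g.c ∧ b = Wd.og g) ∨
      (a = Wd.og g.r * Wd.og g.c * Wd.og g * Wd.og g.c * Wd.og g.l ∧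
       b = Wd.og g.r * Wd.og g.c * Wd.og g.l)))

/-- The congruence `ρ`: the smallest congruence containing `ρ_e ∪ ρ_s`. -/
def rho (X : Type) : Con (Wd X) := conGen (rhoBase X)

/-- The monoid `FT¹(X) = G(X)⁺/ρ`. -/
abbrev FT1 (X : Type) := (rho X).Quotient

/-- The `ρ`-class `[u]` of a word `u`. -/
def cls {X : Type} (u : Wd X) : FT1 X := (u : FT1 X)

/-- `FT(X) = FT¹(X) ∖ {[1]}`, as a subset of `FT¹(X)`. -/
def FTset (X : Type) : Set (FT1 X) := {a | a ≠ cls (Wd.og Gx.gone)}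

section Landscapes

variable {X : Type}

/-- Landscapes (as nonempty lists of letters). -/
def IsLandL (w : List (Gx X)) : Prop :=
  w ≠ [] ∧ w.Chain' (fun a b => Gx.stepUp a b ∨ Gx.stepDown a b)

/-- Uphills. -/
def IsUphillL (w : List (Gx X)) : Prop := w ≠ [] ∧ w.Chain' Gx.stepUp

/-- Downhills. -/
def IsDownhillL (w : List (Gx X)) : Prop := w ≠ [] ∧ w.Chain' Gx.stepDown

/-- No letter is a river. -/
def RiverFreeL : List (Gx X) → Prop
  | a :: b :: c :: t =>
      ¬(a.ht = b.ht + 1 ∧ c.ht = b.ht + 1) ∧ RiverFreeL (b :: c :: t)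
  | _ => True

/-- Mountains: landscapes with endpoints `1` and no rivers. -/
def IsMountainL (w : List (Gx X)) : Prop :=
  IsLandL w ∧ w.head? = some Gx.gone ∧ w.getLast? = some Gx.gone ∧ RiverFreeL w

/-- The set `M¹(X)` of all mountains. -/
def MSet (X : Type) : Set (List (Gx X)) := {w | IsMountainL w}

/-- `u * v`: concatenation merging the repeated junction letter. -/
def mergeL (u v : List (Gx X)) : List (Gx X) := u ++ v.tail

open Classical in
/-- The maximal initial uphill `λ_l` of a landscape. -/
noncomputable def maxUp : List (Gx X) → List (Gx X)
  | a :: b :: t => if Gx.stepUp a b then a :: maxUp (b :: t) else [a]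
  | w => w

/-- The maximal final downhill `λ_r` of a landscape. -/
noncomputable def lamRL (w : List (Gx X)) : List (Gx X) := (maxUp w.reverse).reverse

/-- The peak `κ` of a mountain. -/
noncomputable def peakL (w : List (Gx X)) : Gx X := (maxUp w).getLast?.getD Gx.gone

/-- `β₁` on a letter: the mountain `λ_l(g) * λ_r(g)`. -/
def beta1g (g : Gx X) : List (Gx X) := mergeL (Gx.lamL g) (Gx.lamR g)

/-- `β₁` on a word: `β₁(g₀) * ⋯ * β₁(g_n)`. -/
def beta1L : List (Gx X) → List (Gx X)
  | [] => []
  | [g] => beta1g g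
  | g :: t => mergeL (beta1g g) (beta1L t)

/-- One uplifting of a river. -/
def UpStep (u v : List (Gx X)) : Prop :=
  ∃ (p s : List (Gx X)) (a b c : Gx X),
    u = p ++ a :: b :: c :: s ∧ a.ht = b.ht + 1 ∧ c.ht = b.ht + 1 ∧
    ((a = c ∧ v = p ++ a :: s) ∨
     (a ≠ c ∧ ∃ d : Gx X, d.1 = PreG.node c.1 b.1 a.1 ∧ v = p ++ a :: d :: c :: s))

/-- The reflexive and transitive closure `→*` of uplifting of rivers. -/
def UpStar : List (Gx X) → List (Gx X) → Prop := Relation.ReflTransGen UpStep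

open Classical in
/-- `β₂(u)`: the unique landscape with no rivers reachable from `u` by
upliftings of rivers. -/
noncomputable def beta2L (u : List (Gx X)) : List (Gx X) :=
  if h : ∃ v, UpStar u v ∧ RiverFreeL v ∧ IsLandL v then h.choose else u

/-- `β(u) = β₂(β₁(u))`. -/
noncomputable def betaL (u : List (Gx X)) : List (Gx X) := beta2L (beta1L u)

/-- The operation `⊙` on mountains: `u ⊙ v = β₂(u * v)`. -/
noncomputable def odotL (u v : List (Gx X)) : List (Gx X) := beta2L (mergeL u v)

/-- Valleys: a downhill followed by an uphill (junction merged). -/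
def IsValleyL (w : List (Gx X)) : Prop :=
  ∃ d u : List (Gx X), IsDownhillL d ∧ IsUphillL u ∧ d.getLast? = u.head? ∧
    w = mergeL d u

/-- Canyons: valleys with equal endpoints. -/
def IsCanyonL (w : List (Gx X)) : Prop := IsValleyL w ∧ w.head? = w.getLast?

/-- Gorges: canyons `w` with `w →* σ(w)`. -/
def IsGorgeL (w : List (Gx X)) : Prop :=
  IsCanyonL w ∧ ∃ a, w.head? = some a ∧ UpStar w [a]

end Landscapes

section Green

variable {X : Type}

/-- `a ≤_R b`. -/
def leR (a b : FT1 X) : Prop := ∃ m, a = b * m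

/-- `a ≤_L b`. -/
def leL (a b : FT1 X) : Prop := ∃ m, a = m * b

/-- `a ≤_J b`. -/
def leJ (a b : FT1 X) : Prop := ∃ m n, a = m * b * n

/-- The right ideal `aM`. -/
def rSet (a : FT1 X) : Set (FT1 X) := {x | ∃ m, x = a * m}

/-- The left ideal `Ma`. -/
def lSet (a : FT1 X) : Set (FT1 X) := {x | ∃ m, x = m * a}

/-- The two-sided ideal `MaM`. -/
def jSet (a : FT1 X) : Set (FT1 X) := {x | ∃ m n, x = m * a * n}

/-- Green's relation `R`. -/
def GreenR (a b : FT1 X) : Prop := rSet a = rSet b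

/-- Green's relation `L`. -/
def GreenL (a b : FT1 X) : Prop := lSet a = lSet b

/-- Green's relation `J`. -/
def GreenJ (a b : FT1 X) : Prop := jSet a = jSet b

/-- Green's relation `H = L ∩ R`. -/
def GreenH (a b : FT1 X) : Prop := GreenR a b ∧ GreenL a b

/-- Green's relation `D = L ∨ R` (join as equivalence relations). -/
def GreenD : FT1 X → FT1 X → Prop :=
  Relation.EqvGen (fun a b => GreenL a b ∨ GreenR a b)

/-- The natural partial order on a regular semigroup: `s ≤ t` iff
`s = et = tf` for some idempotents `e`, `f`. -/
def natLe (s t : FT1 X) : Prop :=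
  ∃ e f : FT1 X, e * e = e ∧ f * f = f ∧ s = e * t ∧ s = t * f

end Green

/-- The sandwich set `S(e, f)`. -/
def sandwich {S : Type*} [Mul S] (e f : S) : Set S :=
  {h | h * h = h ∧ f * h = h ∧ h * e = h ∧ e * h * f = e * f}

/-- Skeleton mappings `φ : G(X) → E(S¹)`. -/
def IsSkeletonMap {X : Type} {S : Type} [Semigroup S] (φ : Gx X → WithOne S) : Prop :=
  (Function.Injective fun x : X => φ (Gx.ofX x)) ∧
  (∀ x : X, ∃ s : S, s * s = s ∧ φ (Gx.ofX x) = (s : WithOne S)) ∧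
  (∀ g : Gx X, φ g * φ g = φ g) ∧
  (∀ g : Gx X, g.ht = 1 → φ Gx.gone * φ g = φ g ∧ φ g * φ Gx.gone = φ g) ∧
  (∀ g : Gx X, 2 ≤ g.ht → φ g ∈ sandwich (φ g.r * φ g.c) (φ g.c * φ g.l))

/-!
The sandwich conditions on `gφ` say exactly that `φ` respects the relations `ρ_s`, and by
induction on the height `1φ` is an identity for every `gφ`, so `φ` respects `ρ_e` as well and
factors through `ρ`. Uniqueness and the description of the image hold because `FT¹(X)` is
generated by the classes `[g]`, and regularity of the image is inherited from `FT¹(X)`.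

In `FT¹(X)` every element is the product along a landscape from `1` to `1`: the letter `g`
gives its two hills, using `[g^c g^l g] = [g] = [g g^r g^c]`. Rivers can be removed without
changing the product: a river `a b a` collapses to `a`, and a river `a b c` with `a ≠ c` is
uplifted to `a d c` with `d = (c, b, a)`, which is where the third relation of `ρ_s` enters.
What remains is an uphill to a peak `g` followed by a downhill, and the product along the
reversed landscape is an inverse, because `[D][D reversed] = [g]` for every downhill `D` from `g`.
-/

section Semigroup

variable {M : Type*} [Semigroup M]

theorem mul_mul_eq_of_river {a b c d : M} (hb : b * b = b) (hbcd : b * c * d = d)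
    (hdab : d * a * b = d) (habdbc : a * b * d * b * c = a * b * c) :
    a * b * c = a * d * c := by
  calc a * b * c = a * b * (b * c * d) * b * c := by rw [hbcd, habdbc]
    _ = a * (b * b) * c * d * b * c := by simp only [mul_assoc]
    _ = a * b * c * (d * a * b) * b * c := by rw [hb, hdab]
    _ = a * b * c * d * a * (b * b) * c := by simp only [mul_assoc]
    _ = a * (b * c * d) * (a * b) * c := by rw [hb]; simp only [mul_assoc]
    _ = a * (d * a * b) * c := by rw [hbcd]; simp only [mul_assoc]
    _ = a * d * c := by rw [hdab]

theorem inverse_mul_of_inverse {e a a' b b' : M} (ha : a' * a = e) (hb : b * b' = e)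
    (hae : a * e = a) (hbe : b' * e = b') :
    a * b * (b' * a') * (a * b) = a * b ∧ b' * a' * (a * b) * (b' * a') = b' * a' := by
  constructor
  · calc a * b * (b' * a') * (a * b) = a * (b * b') * (a' * a) * b := by
          simp only [mul_assoc]
      _ = a * b := by rw [ha, hb, hae, hae]
  · calc b' * a' * (a * b) * (b' * a') = b' * (a' * a) * (b * b') * a' := by
          simp only [mul_assoc]
      _ = b' * a' := by rw [ha, hb, hbe, hbe]

end Semigroup

theorem List.head?_append_cons {α : Type*} (l₁ : List α) (a : α) (l₂ : List α) :
    (l₁ ++ a :: l₂).head? = (l₁ ++ [a]).head? := by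
  cases l₁ <;> rfl

namespace Gx

variable {X : Type}

theorem eq_gone_of_ht_eq_zero {g : Gx X} (h : g.ht = 0) : g = gone := by
  obtain ⟨g, hg⟩ := g
  cases hg with
  | one => rfl
  | base x => simp [Gx.ht, PreG.ht] at h
  | node => simp [Gx.ht, PreG.ht] at h

theorem l_eq_gone_and_r_eq_gone_and_c_eq_self {g : Gx X} (h : g.ht ≤ 1) :
    g.l = gone ∧ g.r = gone ∧ g.c = g := by
  obtain ⟨g, hg⟩ := g
  cases hg with
  | one => exact ⟨rfl, rfl, rfl⟩
  | base x => exact ⟨rfl, rfl, rfl⟩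
  | node _ _ _ hpos => simp only [Gx.ht, PreG.ht] at h; omega

def IsChild (a b : Gx X) : Prop := stepUp a b ∧ a.ht + 1 = b.ht

theorem isChild_l {g : Gx X} (h : 1 ≤ g.ht) : IsChild g.l g :=
  ⟨.inl rfl, by
    obtain ⟨g, hg⟩ := g
    cases hg with
    | one => simp [Gx.ht, PreG.ht] at h
    | base x => rfl
    | node => rfl⟩

theorem isChild_r {g : Gx X} (h : 1 ≤ g.ht) : IsChild g.r g :=
  ⟨.inr rfl, by
    obtain ⟨g, hg⟩ := g
    cases hg with
    | one => simp [Gx.ht, PreG.ht] at h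
    | base x => rfl
    | node _ _ _ _ hlr => simp only [Gx.ht, Gx.r, PreG.ht, PreG.right]; omega⟩

theorem isChild_c_l {g : Gx X} (h : 2 ≤ g.ht) : IsChild g.c g.l := by
  obtain ⟨g, hg⟩ := g
  cases hg with
  | one => simp [Gx.ht, PreG.ht] at h
  | base x => simp [Gx.ht, PreG.ht] at h
  | node _ _ _ _ _ hcl _ hc =>
    exact ⟨hc.imp (fun h => Subtype.ext h) (fun h => Subtype.ext h), hcl⟩

theorem isChild_c_r {g : Gx X} (h : 2 ≤ g.ht) : IsChild g.c g.r := by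
  obtain ⟨g, hg⟩ := g
  cases hg with
  | one => simp [Gx.ht, PreG.ht] at h
  | base x => simp [Gx.ht, PreG.ht] at h
  | node _ _ _ _ hlr hcl _ _ hc =>
    exact ⟨hc.imp (fun h => Subtype.ext h) (fun h => Subtype.ext h), hcl.trans hlr⟩

def upliftNode (a b c : Gx X) (hba : IsChild b a) (hbc : IsChild b c) (hca : c ≠ a) : Gx X :=
  ⟨PreG.node c.1 b.1 a.1, .node c.2 b.2 a.2 (show 1 ≤ c.ht by have := hbc.2; omega)
    (show c.ht = a.ht by have := hba.2; have := hbc.2; omega) hbc.2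
    (fun h => hca (Subtype.ext h)) (hbc.1.imp (congrArg _) (congrArg _))
    (hba.1.imp (congrArg _) (congrArg _))⟩

theorem two_le_ht_upliftNode {a b c : Gx X} (hba : IsChild b a) (hbc : IsChild b c)
    (hca : c ≠ a) : 2 ≤ (upliftNode a b c hba hbc hca).ht := by
  have := hbc.2
  show 2 ≤ c.ht + 1
  omega

def IsStep (a b : Gx X) : Prop := IsChild a b ∨ IsChild b a

def IsUnimodal (w : List (Gx X)) : Prop :=
  ∃ A g B, w = A ++ g :: B ∧ (A ++ [g]).IsChain IsChild ∧ (g :: B).IsChain (flip IsChild)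

theorem IsUnimodal.isChain_isStep {w : List (Gx X)} (h : IsUnimodal w) : w.IsChain IsStep := by
  obtain ⟨A, g, B, rfl, hA, hB⟩ := h
  have : (A ++ [g] ++ B).IsChain IsStep :=
    (hA.imp fun _ _ => Or.inl).append_overlap (hB.imp fun _ _ => Or.inr) (List.cons_ne_nil g [])
  simpa only [List.append_assoc, List.singleton_append] using this

theorem IsUnimodal.cons {w : List (Gx X)} (h : IsUnimodal w) {y : Gx X}
    (hy : ∀ x ∈ w.head?, IsChild y x) : IsUnimodal (y :: w) := by
  obtain ⟨A, g, B, rfl, hA, hB⟩ := h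
  exact ⟨y :: A, g, B, rfl, hA.cons (by simpa using hy), hB⟩

end Gx

namespace FT1

open Gx

variable {X : Type}

def gen (g : Gx X) : FT1 X := cls (Wd.og g)

theorem cls_eq_of_rhoBase {u v : Wd X} (h : rhoBase X u v) : cls u = cls v :=
  (Con.eq _).mpr (ConGen.Rel.of _ _ h)

theorem closure_range_gen : Subsemigroup.closure (Set.range (gen : Gx X → FT1 X)) = ⊤ := by
  refine eq_top_iff.2 fun x _ => Con.induction_on x fun w => ?_
  induction w using FreeSemigroup.recOnMul with
  | ih1 g => exact Subsemigroup.subset_closure ⟨g, rfl⟩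
  | ih2 g w _ hw =>
    exact Subsemigroup.mul_mem (x := gen g) _
      (Subsemigroup.subset_closure (Set.mem_range_self g)) hw

theorem gen_gone_mul (x : FT1 X) : gen gone * x = x :=
  Subsemigroup.dense_induction _ closure_range_gen
    (by rintro _ ⟨g, rfl⟩; exact cls_eq_of_rhoBase (.inl ⟨g, .inl ⟨rfl, rfl⟩⟩))
    (fun x y hx _ => by rw [← mul_assoc, hx]) x

theorem mul_gen_gone (x : FT1 X) : x * gen gone = x :=
  Subsemigroup.dense_induction _ closure_range_gen
    (by rintro _ ⟨g, rfl⟩; exact cls_eq_of_rhoBase (.inl ⟨g, .inr (.inl ⟨rfl, rfl⟩)⟩))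
    (fun x y _ hy => by rw [mul_assoc, hy]) x

instance : Monoid (FT1 X) where
  one := gen gone
  one_mul := gen_gone_mul
  mul_one := mul_gen_gone

theorem gen_gone : gen (gone : Gx X) = 1 := rfl

theorem gen_mul_self (g : Gx X) : gen g * gen g = gen g :=
  cls_eq_of_rhoBase (.inl ⟨g, .inr (.inr ⟨rfl, rfl⟩)⟩)

theorem gen_c_mul_gen_l_mul_gen (g : Gx X) : gen g.c * gen g.l * gen g = gen g := by
  rcases le_or_gt 2 g.ht with h | h
  · exact cls_eq_of_rhoBase (.inr ⟨g, h, .inl ⟨rfl, rfl⟩⟩)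
  · obtain ⟨hl, -, hc⟩ := l_eq_gone_and_r_eq_gone_and_c_eq_self (show g.ht ≤ 1 by omega)
    rw [hl, hc, gen_gone, mul_one, gen_mul_self]

theorem gen_mul_gen_r_mul_gen_c (g : Gx X) : gen g * gen g.r * gen g.c = gen g := by
  rcases le_or_gt 2 g.ht with h | h
  · exact cls_eq_of_rhoBase (.inr ⟨g, h, .inr (.inl ⟨rfl, rfl⟩)⟩)
  · obtain ⟨-, hr, hc⟩ := l_eq_gone_and_r_eq_gone_and_c_eq_self (show g.ht ≤ 1 by omega)
    rw [hr, hc, gen_gone, mul_one, gen_mul_self]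

theorem gen_r_mul_gen_c_mul_gen_mul_gen_c_mul_gen_l {g : Gx X} (h : 2 ≤ g.ht) :
    gen g.r * gen g.c * gen g * gen g.c * gen g.l = gen g.r * gen g.c * gen g.l :=
  cls_eq_of_rhoBase (.inr ⟨g, h, .inr (.inr ⟨rfl, rfl⟩)⟩)

theorem gen_mul_gen_r_mul_gen_c_mul_gen_l_mul_gen (g : Gx X) :
    gen g * gen g.r * gen g.c * gen g.l * gen g = gen g := by
  calc gen g * gen g.r * gen g.c * gen g.l * gen g
      = gen g * gen g.r * (gen g.c * gen g.c) * gen g.l * gen g := by rw [gen_mul_self]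
    _ = (gen g * gen g.r * gen g.c) * (gen g.c * gen g.l * gen g) := by simp only [mul_assoc]
    _ = gen g := by rw [gen_mul_gen_r_mul_gen_c, gen_c_mul_gen_l_mul_gen, gen_mul_self]

theorem gen_mul_gen_mul_gen_of_isChild {b g : Gx X} (h : IsChild b g) :
    gen g * gen b * gen g = gen g := by
  rcases h.1 with rfl | rfl
  · nth_rewrite 1 [← gen_mul_gen_r_mul_gen_c g]
    exact gen_mul_gen_r_mul_gen_c_mul_gen_l_mul_gen g
  · nth_rewrite 2 [← gen_c_mul_gen_l_mul_gen g]
    simpa only [mul_assoc] using gen_mul_gen_r_mul_gen_c_mul_gen_l_mul_gen g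

def genProd (w : List (Gx X)) : FT1 X := (w.map gen).prod

@[simp] theorem genProd_nil : genProd ([] : List (Gx X)) = 1 := rfl

@[simp] theorem genProd_cons (g : Gx X) (w : List (Gx X)) :
    genProd (g :: w) = gen g * genProd w := by
  simp [genProd]

@[simp] theorem genProd_append (v w : List (Gx X)) :
    genProd (v ++ w) = genProd v * genProd w := by
  simp [genProd]

theorem genProd_mul_genProd_reverse {g : Gx X} {B : List (Gx X)}
    (h : (g :: B).IsChain (flip IsChild)) :
    genProd (g :: B) * genProd (g :: B).reverse = gen g := by
  induction B generalizing g with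
  | nil => simpa using gen_mul_self g
  | cons b B ih =>
    obtain ⟨hbg, hB⟩ := List.isChain_cons_cons.1 h
    calc genProd (g :: b :: B) * genProd (g :: b :: B).reverse
        = gen g * (genProd (b :: B) * genProd (b :: B).reverse) * gen g := by
          simp only [genProd_cons, List.reverse_cons, genProd_append, genProd_nil, mul_one,
            mul_assoc]
      _ = gen g := by rw [ih hB, gen_mul_gen_mul_gen_of_isChild hbg]

theorem exists_inverse_genProd_of_isUnimodal {w : List (Gx X)} (h : IsUnimodal w) :
    ∃ y, genProd w * y * genProd w = genProd w ∧ y * genProd w * y = y := by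
  obtain ⟨A, g, B, rfl, hA, hB⟩ := h
  have hup : genProd (A ++ [g]).reverse * genProd (A ++ [g]) = gen g := by
    have hA' : (g :: A.reverse).IsChain (flip IsChild) := by
      simpa only [List.reverse_append, List.reverse_singleton, List.singleton_append]
        using List.isChain_reverse (R := flip IsChild) |>.2 hA
    simpa using genProd_mul_genProd_reverse hA'
  have hw : genProd (A ++ g :: B) = genProd (A ++ [g]) * genProd (g :: B) := by
    simp [mul_assoc, ← mul_assoc (gen g), gen_mul_self]
  refine ⟨genProd (g :: B).reverse * genProd (A ++ [g]).reverse, hw ▸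
    inverse_mul_of_inverse hup (genProd_mul_genProd_reverse hB) ?_ ?_⟩
  · simp [mul_assoc, gen_mul_self]
  · simp [mul_assoc, gen_mul_self]

theorem exists_isUnimodal_cons_of_isChild : ∀ (A : List (Gx X)) {g y : Gx X} {B : List (Gx X)},
    (A ++ [g]).IsChain IsChild → (g :: B).IsChain (flip IsChild) →
    (∀ x ∈ (A ++ [g]).head?, IsChild x y) →
    ∃ w, IsUnimodal w ∧ w.head? = some y ∧ genProd w = gen y * genProd (A ++ g :: B)
  | [], g, y, B, _, hB, hy =>
    have hyg : ∀ z ∈ (g :: B).head?, flip IsChild y z := by rintro _ ⟨⟩; exact hy g rfl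
    ⟨y :: g :: B, ⟨[], y, g :: B, rfl, .singleton y, hB.cons hyg⟩, rfl, rfl⟩
  | x :: A, g, y, B, hA, hB, hy => by
    obtain ⟨x', T, hT⟩ := List.exists_cons_of_ne_nil (List.concat_ne_nil g A)
    have hxy : IsChild x y := hy x rfl
    have hA' : (A ++ [g]).IsChain IsChild := hA.tail
    have hxx' : IsChild x x' := by
      have hA : (x :: (A ++ [g])).IsChain IsChild := hA
      rw [hT] at hA
      exact (List.isChain_cons_cons.1 hA).1
    have hrest : genProd (A ++ g :: B) = gen x' * genProd (T ++ B) := by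
      rw [List.append_cons, hT, List.cons_append, genProd_cons]
    by_cases hyx' : y = x'
    · subst hyx'
      refine ⟨A ++ g :: B, ⟨A, g, B, rfl, hA', hB⟩,
        by rw [List.head?_append_cons, hT]; rfl, ?_⟩
      rw [List.cons_append, genProd_cons, hrest, ← mul_assoc, ← mul_assoc,
        gen_mul_gen_mul_gen_of_isChild hxx']
    · -- the river `y x x'` is uplifted to `y d x'`
      set d := upliftNode y x x' hxy hxx' (Ne.symm hyx')
      have hd : 2 ≤ d.ht := two_le_ht_upliftNode hxy hxx' (Ne.symm hyx')
      obtain ⟨w, hw, hwh, hwP⟩ := exists_isUnimodal_cons_of_isChild A (y := d) hA' hB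
        (by rw [hT]; rintro _ ⟨⟩; exact isChild_l (g := d) (by omega))
      refine ⟨y :: w, hw.cons (by rw [hwh]; rintro _ ⟨⟩; exact isChild_r (g := d) (by omega)),
        rfl, ?_⟩
      have := mul_mul_eq_of_river (a := gen y) (c := gen x') (d := gen d) (gen_mul_self x)
        (gen_c_mul_gen_l_mul_gen d) (gen_mul_gen_r_mul_gen_c d)
        (gen_r_mul_gen_c_mul_gen_mul_gen_c_mul_gen_l hd)
      rw [genProd_cons, hwP, List.cons_append, genProd_cons, hrest]
      simp only [← mul_assoc]
      rw [this]

theorem exists_isUnimodal_of_isChain : ∀ {w : List (Gx X)}, w.IsChain IsStep → w ≠ [] →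
    ∃ m, IsUnimodal m ∧ m.head? = w.head? ∧ genProd m = genProd w
  | [y], _, _ => ⟨[y], ⟨[], y, [], rfl, .singleton y, .singleton y⟩, rfl, rfl⟩
  | y :: x :: w, h, _ => by
    obtain ⟨m, hm, hmh, hmP⟩ :=
      exists_isUnimodal_of_isChain (List.isChain_cons_cons.1 h).2 (List.cons_ne_nil x w)
    rw [genProd_cons, ← hmP]
    rcases (List.isChain_cons_cons.1 h).1 with hyx | hxy
    · exact ⟨y :: m, hm.cons (by rw [hmh]; rintro _ ⟨⟩; exact hyx), rfl, genProd_cons y m⟩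
    · obtain ⟨A, g, B, rfl, hA, hB⟩ := hm
      refine exists_isUnimodal_cons_of_isChild A hA hB ?_
      rw [← List.head?_append_cons A g B, hmh]
      rintro _ ⟨⟩
      exact hxy

theorem exists_uphill (g : Gx X) : ∃ A : List (Gx X),
    (A ++ [g]).IsChain IsChild ∧ (A ++ [g]).head? = some gone ∧ genProd A * gen g = gen g := by
  by_cases h : 2 ≤ g.ht
  · obtain ⟨A, hA, hAh, hAP⟩ := exists_uphill g.c
    refine ⟨A ++ [g.c, g.l], ?_, ?_, ?_⟩
    · have hcl : [g.c, g.l, g].IsChain IsChild := .cons_cons (isChild_c_l h)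
        (.cons_cons (isChild_l (by omega)) (.singleton g))
      simpa using hA.append_overlap (l₃ := [g.l, g]) hcl (List.cons_ne_nil _ _)
    · simpa using hAh
    · simp only [genProd_append, genProd_cons, genProd_nil, mul_one, ← mul_assoc]
      rw [hAP, gen_c_mul_gen_l_mul_gen]
  · rcases Nat.lt_or_ge g.ht 1 with h0 | h1
    · obtain rfl := eq_gone_of_ht_eq_zero (show g.ht = 0 by omega)
      exact ⟨[], .singleton _, rfl, one_mul _⟩
    · obtain ⟨hl, -, -⟩ := l_eq_gone_and_r_eq_gone_and_c_eq_self (show g.ht ≤ 1 by omega)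
      exact ⟨[gone], .cons_cons (hl ▸ isChild_l h1) (.singleton g), rfl, by simp [gen_gone]⟩
termination_by g.ht
decreasing_by exact ht_c_lt h

theorem exists_downhill (g : Gx X) : ∃ B : List (Gx X), (g :: B).IsChain (flip IsChild) ∧
    (g :: B).getLast? = some gone ∧ gen g * genProd B = gen g := by
  by_cases h : 2 ≤ g.ht
  · obtain ⟨B, hB, hBl, hBP⟩ := exists_downhill g.c
    refine ⟨g.r :: g.c :: B, .cons_cons (isChild_r (by omega)) (.cons_cons (isChild_c_r h) hB),
      by simpa using hBl, ?_⟩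
    rw [genProd_cons, genProd_cons, hBP, ← mul_assoc, gen_mul_gen_r_mul_gen_c]
  · rcases Nat.lt_or_ge g.ht 1 with h0 | h1
    · obtain rfl := eq_gone_of_ht_eq_zero (show g.ht = 0 by omega)
      exact ⟨[], .singleton _, rfl, mul_one _⟩
    · obtain ⟨-, hr, -⟩ := l_eq_gone_and_r_eq_gone_and_c_eq_self (show g.ht ≤ 1 by omega)
      exact ⟨[gone], .cons_cons (hr ▸ isChild_r h1) (.singleton gone), rfl,
        by simp [gen_gone]⟩
termination_by g.ht
decreasing_by exact ht_c_lt h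

theorem exists_isChain_genProd_eq (x : FT1 X) : ∃ w : List (Gx X), w.IsChain IsStep ∧
    w.head? = some gone ∧ w.getLast? = some gone ∧ genProd w = x := by
  refine Subsemigroup.dense_induction _ closure_range_gen ?_ ?_ x
  · rintro _ ⟨g, rfl⟩
    obtain ⟨A, hA, hAh, hAP⟩ := exists_uphill g
    obtain ⟨B, hB, hBl, hBP⟩ := exists_downhill g
    refine ⟨A ++ g :: B, IsUnimodal.isChain_isStep ⟨A, g, B, rfl, hA, hB⟩,
      by rwa [List.head?_append_cons], by rwa [List.getLast?_append_cons], ?_⟩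
    rw [genProd_append, genProd_cons, ← mul_assoc, hAP, hBP]
  · rintro _ _ ⟨u, hu, huh, hul, rfl⟩ ⟨v, hv, hvh, hvl, rfl⟩
    obtain ⟨u, rfl⟩ := List.getLast?_eq_some_iff.1 hul
    obtain ⟨v, rfl⟩ := List.head?_eq_some_iff.1 hvh
    refine ⟨u ++ gone :: v, by simpa using hu.append_overlap hv (List.cons_ne_nil _ _),
      by rwa [List.head?_append_cons], by rwa [List.getLast?_append_cons], ?_⟩
    simp [gen_gone]

theorem exists_inverse (x : FT1 X) : ∃ y, x * y * x = x ∧ y * x * y = y := by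
  obtain ⟨w, hw, hwh, -, rfl⟩ := exists_isChain_genProd_eq x
  obtain ⟨m, hm, -, hmw⟩ := exists_isUnimodal_of_isChain hw (by rintro rfl; simp at hwh)
  exact hmw ▸ exists_inverse_genProd_of_isUnimodal hm

end FT1

namespace IsSkeletonMap

open Gx

variable {X S : Type} [Semigroup S] {φ : Gx X → WithOne S}

theorem gone_mul_and_mul_gone (hφ : IsSkeletonMap φ) (g : Gx X) :
    φ gone * φ g = φ g ∧ φ g * φ gone = φ g := by
  have ⟨_, _, hidem, hone, hsand⟩ := hφ
  by_cases h : 2 ≤ g.ht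
  · obtain ⟨-, hfh, hhe, -⟩ := hsand g h
    obtain ⟨hgone_c, hc_gone⟩ := gone_mul_and_mul_gone hφ g.c
    constructor
    · conv_lhs => rw [← hfh]
      rw [← mul_assoc, ← mul_assoc, hgone_c, hfh]
    · conv_lhs => rw [← hhe]
      rw [mul_assoc, mul_assoc, hc_gone, hhe]
  · rcases Nat.lt_or_ge g.ht 1 with h0 | h1
    · obtain rfl := eq_gone_of_ht_eq_zero (show g.ht = 0 by omega)
      exact ⟨hidem gone, hidem gone⟩
    · exact hone g (by omega)
termination_by g.ht
decreasing_by exact ht_c_lt h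

theorem rho_le_ker (hφ : IsSkeletonMap φ) : rho X ≤ Con.ker (FreeSemigroup.lift φ) := by
  have ⟨_, _, hidem, _, hsand⟩ := hφ
  refine Con.conGen_le.2 fun u v h => ?_
  rcases h with ⟨g, ⟨rfl, rfl⟩ | ⟨rfl, rfl⟩ | ⟨rfl, rfl⟩⟩ |
    ⟨g, hg, ⟨rfl, rfl⟩ | ⟨rfl, rfl⟩ | ⟨rfl, rfl⟩⟩ <;>
    simp only [Con.ker_rel, Wd.og, map_mul, FreeSemigroup.lift_of]
  · exact (hφ.gone_mul_and_mul_gone g).1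
  · exact (hφ.gone_mul_and_mul_gone g).2
  · exact hidem g
  · exact (hsand g hg).2.1
  · rw [mul_assoc]
    exact (hsand g hg).2.2.1
  · rw [mul_assoc _ (φ g.c), (hsand g hg).2.2.2, ← mul_assoc,
      mul_assoc (φ g.r) (φ g.c) (φ g.c), hidem]

def lift (hφ : IsSkeletonMap φ) : FT1 X →ₙ* WithOne S where
  toFun x := Con.liftOn x (FreeSemigroup.lift φ) fun _ _ h => hφ.rho_le_ker h
  map_mul' x y := Con.induction_on₂ x y fun _ _ => map_mul (FreeSemigroup.lift φ) _ _

end IsSkeletonMap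

theorem statement12_general {X : Type} {S : Type} [Semigroup S]
    (φ : Gx X → WithOne S) (hφ : IsSkeletonMap φ) :
    (∃! φb : FT1 X →ₙ* WithOne S, ∀ g : Gx X, φb (cls (Wd.og g)) = φ g) ∧
    (∀ φb : FT1 X →ₙ* WithOne S, (∀ g : Gx X, φb (cls (Wd.og g)) = φ g) →
      Set.range φb = (Subsemigroup.closure (Set.range φ) : Subsemigroup (WithOne S)) ∧
      (∀ a ∈ Set.range φb, ∃ b ∈ Set.range φb, a * b * a = a ∧ b * a * b = b) ∧
      (∀ a ∈ Set.range φb, φ Gx.gone * a = a ∧ a * φ Gx.gone = a)) := by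
  refine ⟨⟨hφ.lift, fun _ => rfl, fun φb hφb => ?_⟩, fun φb hφb => ⟨?_, ?_, ?_⟩⟩
  · refine MulHom.eq_of_eqOn_dense FT1.closure_range_gen ?_
    rintro _ ⟨g, rfl⟩
    exact hφb g
  · have hφb' : φb ∘ FT1.gen = φ := funext hφb
    rw [← MulHom.coe_srange, MulHom.srange_eq_map, ← FT1.closure_range_gen,
      MulHom.map_mclosure, ← Set.range_comp, hφb']
  · rintro _ ⟨x, rfl⟩
    obtain ⟨y, hxyx, hyxy⟩ := FT1.exists_inverse x
    refine ⟨φb y, ⟨y, rfl⟩, ?_, ?_⟩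
    · rw [← map_mul, ← map_mul, hxyx]
    · rw [← map_mul, ← map_mul, hyxy]
  · rintro _ ⟨x, rfl⟩
    rw [← hφb Gx.gone, ← map_mul, ← map_mul]
    exact ⟨congrArg φb (one_mul x), congrArg φb (mul_one x)⟩

theorem statement12 {X : Type} [Nonempty X] {S : Type} [Semigroup S]
    (φ : Gx X → WithOne S) (hφ : IsSkeletonMap φ) :
    (∃! φb : FT1 X →ₙ* WithOne S, ∀ g : Gx X, φb (cls (Wd.og g)) = φ g) ∧
    (∀ φb : FT1 X →ₙ* WithOne S, (∀ g : Gx X, φb (cls (Wd.og g)) = φ g) →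
      Set.range φb = (Subsemigroup.closure (Set.range φ) : Subsemigroup (WithOne S)) ∧
      (∀ a ∈ Set.range φb, ∃ b ∈ Set.range φb, a * b * a = a ∧ b * a * b = b) ∧
      (∀ a ∈ Set.range φb, φ Gx.gone * a = a ∧ a * φ Gx.gone = a)) :=
  statement12_general φ hφ
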